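/- arXiv:math/0511058 — 2 statements merged into one kernel-verified Lean document; each statement's English description precedes it below -/
import Mathlib

section
/- Let L be a nonnegative integer-valued square integrable random variable with E[L] > 0. Define ψ_c(s) := c(1 − E[s^{L/c}]) − E[L](1 − s) for s ∈ [0,1] and c > 0. If c ≥ E[L^2]/E[L], then ψ_c is convex on (0,1). -/
/-!
Writing `p = L/c`, the function `s ↦ -s^p - p(1-p) s log s` is convex on `[0,1]`: its second
derivative `p(1-p)(s^{p-2} - s⁻¹)` is nonnegative on `(0,1)`, both factors changing sign at
`p = 1`. Taking expectations, `ψ_c` is `c` times a convex function, plus `c E[p(1-p)] s log s`,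
plus an affine function, and `c E[p(1-p)] = E[L] - E[L²]/c ≥ 0` exactly when `c ≥ E[L²]/E[L]`.
-/

open MeasureTheory ProbabilityTheory Real Set

theorem convexOn_neg_rpow_sub_mul_mul_log {p : ℝ} (hp : 0 ≤ p) :
    ConvexOn ℝ (Icc 0 1) fun s => -s ^ p - p * (1 - p) * (s * log s) := by
  refine convexOn_of_hasDerivWithinAt2_nonneg (convex_Icc 0 1)
    (f' := fun s => -(p * s ^ (p - 1)) - p * (1 - p) * (log s + 1))
    (f'' := fun s => p * (1 - p) * (s ^ (p - 2) - s⁻¹))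
    ((continuous_rpow_const hp).neg.sub (continuous_mul_log.const_mul (p * (1 - p)))).continuousOn
    ?_ ?_ ?_ <;> rw [interior_Icc] <;> intro x hx
  · have hpow := (hasDerivAt_rpow_const (p := p) (Or.inl hx.1.ne')).neg
    have hlog := ((hasDerivAt_id x).mul (hasDerivAt_log hx.1.ne')).const_mul (p * (1 - p))
    refine (hpow.sub hlog).hasDerivWithinAt.congr_deriv ?_
    simp [mul_inv_cancel₀ hx.1.ne']
  · have hpow := ((hasDerivAt_rpow_const (p := p - 1) (Or.inl hx.1.ne')).const_mul p).neg
    have hlog := ((hasDerivAt_log hx.1.ne').add_const 1).const_mul (p * (1 - p))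
    refine (hpow.sub hlog).hasDerivWithinAt.congr_deriv ?_
    ring_nf
  · rw [← rpow_neg_one]
    rcases le_total p 1 with h | h
    · exact mul_nonneg (mul_nonneg hp (by linarith))
        (sub_nonneg.2 (rpow_le_rpow_of_exponent_ge hx.1 hx.2.le (by linarith)))
    · exact mul_nonneg_of_nonpos_of_nonpos
        (mul_nonpos_of_nonneg_of_nonpos hp (by linarith))
        (sub_nonpos.2 (rpow_le_rpow_of_exponent_ge hx.1 hx.2.le (by linarith)))

section

variable {Ω : Type*} [MeasurableSpace Ω] {μ : Measure Ω}

theorem integrable_natCast_of_integrable_sq {L : Ω → ℕ} (hL : Measurable L)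
    (hsq : Integrable (fun ω => (L ω : ℝ) ^ 2) μ) : Integrable (fun ω => (L ω : ℝ)) μ :=
  hsq.mono' (measurable_from_nat.comp hL).aestronglyMeasurable <| ae_of_all _ fun ω => by
    rw [norm_of_nonneg (Nat.cast_nonneg _)]
    exact_mod_cast Nat.le_self_pow two_ne_zero (L ω)

theorem integrable_rpow_of_mem_Icc [IsFiniteMeasure μ] {X : Ω → ℝ}
    (hX : Measurable X) (hX0 : ∀ ω, 0 ≤ X ω) {s : ℝ} (hs : s ∈ Icc 0 1) :
    Integrable (fun ω => s ^ X ω) μ :=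
  .of_bound (measurable_const.pow hX).aestronglyMeasurable 1 <| ae_of_all _ fun ω => by
    rw [norm_of_nonneg (rpow_nonneg hs.1 _)]
    exact rpow_le_one hs.1 hs.2 (hX0 ω)

theorem integrable_div_mul_one_sub_div {X : Ω → ℝ} (hX : Integrable X μ)
    (hX2 : Integrable (fun ω => X ω ^ 2) μ) (c : ℝ) :
    Integrable (fun ω => X ω / c * (1 - X ω / c)) μ := by
  have h ω : X ω / c * (1 - X ω / c) = X ω / c - X ω ^ 2 / c ^ 2 := by ring
  simp only [h]
  exact (hX.div_const c).sub (hX2.div_const _)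

theorem mul_integral_div_mul_one_sub_div {X : Ω → ℝ} (hX : Integrable X μ)
    (hX2 : Integrable (fun ω => X ω ^ 2) μ) {c : ℝ} (hc : c ≠ 0) :
    c * ∫ ω, X ω / c * (1 - X ω / c) ∂μ =
      (∫ ω, X ω ∂μ) - (∫ ω, X ω ^ 2 ∂μ) / c := by
  have h ω : X ω / c * (1 - X ω / c) = X ω / c - X ω ^ 2 / c ^ 2 := by ring
  simp only [h]
  rw [integral_sub (hX.div_const c) (hX2.div_const _), integral_div, integral_div]
  field_simp

end

/-- Let `L` be a nonnegative integer-valued square-integrable random variable with `E[L] > 0`,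
and for `c > 0` let `ψ_c(s) := c(1 − E[s^{L/c}]) − E[L](1 − s)` (real powers are `Real.rpow`).
If `c ≥ E[L²]/E[L]`, then `ψ_c` is convex on `(0,1)`. -/
theorem psi_convex
    {Ω : Type*} [MeasureSpace Ω] [IsProbabilityMeasure (ℙ : Measure Ω)]
    (L : Ω → ℕ) (hL : Measurable L)
    (hsq : Integrable (fun ω => ((L ω : ℝ)) ^ 2) ℙ)
    (hpos : 0 < ∫ ω, (L ω : ℝ) ∂ℙ)
    (c : ℝ) (hc : 0 < c)
    (hcm : (∫ ω, (L ω : ℝ) ^ 2 ∂ℙ) / (∫ ω, (L ω : ℝ) ∂ℙ) ≤ c) :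
    ConvexOn ℝ (Set.Ioo (0 : ℝ) 1)
      (fun s => c * (1 - ∫ ω, s ^ ((L ω : ℝ) / c) ∂ℙ) -
        (∫ ω, (L ω : ℝ) ∂ℙ) * (1 - s)) := by
  set p : Ω → ℝ := fun ω => (L ω : ℝ) / c
  have hp0 ω : 0 ≤ p ω := div_nonneg (Nat.cast_nonneg _) hc.le
  have hint_pow s (hs : s ∈ Icc (0 : ℝ) 1) : Integrable (fun ω => s ^ p ω) ℙ :=
    integrable_rpow_of_mem_Icc ((measurable_from_nat.comp hL).div_const c) hp0 hs
  have hint_L := integrable_natCast_of_integrable_sq hL hsq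
  have hint_var : Integrable (fun ω => p ω * (1 - p ω)) ℙ :=
    integrable_div_mul_one_sub_div hint_L hsq c
  have hκ : 0 ≤ c * ∫ ω, p ω * (1 - p ω) ∂ℙ := by
    rw [mul_integral_div_mul_one_sub_div hint_L hsq hc.ne', sub_nonneg, div_le_iff₀ hc, mul_comm]
    exact (div_le_iff₀ hpos).1 hcm
  have hG : ConvexOn ℝ (Icc 0 1)
      fun s => ∫ ω, -s ^ p ω - p ω * (1 - p ω) * (s * log s) ∂ℙ :=
    integral_convexOn_of_integrand_ae (convex_Icc 0 1)
      (ae_of_all _ fun ω => convexOn_neg_rpow_sub_mul_mul_log (hp0 ω))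
      fun s hs => (hint_pow s hs).neg.sub (hint_var.mul_const _)
  have hψ := ((hG.smul hc.le).add
    ((convexOn_mul_log.subset Icc_subset_Ici_self (convex_Icc 0 1)).smul hκ)).add
    (((convexOn_id (convex_Icc 0 1)).smul hpos.le).add_const (c - ∫ ω, (L ω : ℝ) ∂ℙ))
  refine (hψ.subset Ioo_subset_Icc_self (convex_Ioo 0 1)).congr fun s hs => ?_
  simp only [Pi.add_apply, smul_eq_mul, id]
  rw [integral_sub (f := fun ω => -s ^ p ω) (hint_pow s (Ioo_subset_Icc_self hs)).neg
    (hint_var.mul_const _), integral_neg, integral_mul_const]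
  ring
end

section
/- Let X, X_1, X_2, ... be i.i.d. nonnegative random variables and y < E[X] (with E[X] possibly infinite). Then there exists r < 1 such that for every n ≥ 1, P(X_1 + ... + X_n ≤ n·y) ≤ r^n. -/
/-!
Chernoff's bound gives `P(X₀ + ⋯ + X₍ₙ₋₁₎ ≤ n y) ≤ (e^{t y} E[e^{-t X}])ⁿ` for every `t ≥ 0`, so it
suffices to find `t > 0` with `e^{t y} E[e^{-t X}] < 1`. As `E[X]` may be infinite, first pick by
monotone convergence a truncation `Z = min X M` with `y < E[Z]`; replacing `X` by `Z ≤ X` only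
increases `E[e^{-t X}]`. For `0 ≤ Z ≤ M`, the bound `e^{-u} ≤ 1 - u + u²/2` (`u ≥ 0`) gives
`E[e^{-t Z}] ≤ exp (-t E[Z] + t² M² / 2)`, which is below `e^{-t y}` for small `t > 0`.
-/

open MeasureTheory ProbabilityTheory Finset

lemma Real.exp_neg_le_one_sub_add_sq_div_two {u : ℝ} (hu : 0 ≤ u) :
    exp (-u) ≤ 1 - u + u ^ 2 / 2 := by
  -- `(1 - u + u²/2)(1 + u + u²/2) = 1 + u⁴/4 ≥ 1` and `1 + u + u²/2 ≤ exp u`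
  have hq := quadratic_le_exp_of_nonneg hu
  rw [exp_neg, inv_le_iff_one_le_mul₀ (exp_pos u)]
  nlinarith [exp_pos u, pow_nonneg hu 4, sq_nonneg (u - 1)]

section

open Real

variable {Ω : Type*} [MeasurableSpace Ω] {μ : Measure Ω}

lemma iSup_lintegral_ofReal_min_natCast {f : Ω → ℝ} (hf : Measurable f) :
    ⨆ M : ℕ, ∫⁻ ω, ENNReal.ofReal (min (f ω) M) ∂μ = ∫⁻ ω, ENNReal.ofReal (f ω) ∂μ := by
  have hmono : Monotone fun (M : ℕ) ω ↦ ENNReal.ofReal (min (f ω) M) :=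
    fun a b hab ω ↦ ENNReal.ofReal_le_ofReal (min_le_min_left _ (by exact_mod_cast hab))
  rw [← lintegral_iSup (fun M ↦ (hf.min measurable_const).ennreal_ofReal) hmono]
  refine lintegral_congr fun ω ↦ le_antisymm
    (iSup_le fun M ↦ ENNReal.ofReal_le_ofReal (min_le_left _ _)) ?_
  exact le_iSup_of_le ⌈f ω⌉₊ (by rw [min_eq_left (Nat.le_ceil _)])

lemma exists_lt_integral_min_natCast [IsFiniteMeasure μ] {f : Ω → ℝ} (hf : Measurable f)
    (h0 : ∀ᵐ ω ∂μ, 0 ≤ f ω) {y : ℝ} (hy : ENNReal.ofReal y < ∫⁻ ω, ENNReal.ofReal (f ω) ∂μ) :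
    ∃ M : ℕ, y < ∫ ω, min (f ω) M ∂μ := by
  rw [← iSup_lintegral_ofReal_min_natCast hf] at hy
  obtain ⟨M, hM⟩ := lt_iSup_iff.mp hy
  have h0M : ∀ᵐ ω ∂μ, 0 ≤ min (f ω) M := by
    filter_upwards [h0] with ω h using le_min h M.cast_nonneg
  have hint : Integrable (fun ω ↦ min (f ω) M) μ :=
    .of_mem_Icc 0 M (hf.min measurable_const).aemeasurable
      (by filter_upwards [h0M] with ω h using ⟨h, min_le_right _ _⟩)
  rw [← ofReal_integral_eq_lintegral_ofReal hint h0M] at hM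
  exact ⟨M, (ENNReal.ofReal_lt_ofReal_iff'.mp hM).1⟩

lemma integrable_exp_mul_of_nonpos_of_nonneg [IsFiniteMeasure μ] {X : Ω → ℝ} {t : ℝ}
    (ht : t ≤ 0) (hX : AEMeasurable X μ) (h0 : ∀ᵐ ω ∂μ, 0 ≤ X ω) :
    Integrable (fun ω ↦ exp (t * X ω)) μ :=
  .of_mem_Icc 0 1 (measurable_exp.comp_aemeasurable (hX.const_mul t)) <| by
    filter_upwards [h0] with ω h
    exact ⟨(exp_pos _).le, exp_le_one_iff.mpr (mul_nonpos_of_nonpos_of_nonneg ht h)⟩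

lemma mgf_neg_le_one_sub_mul_integral_add [IsProbabilityMeasure μ] {X : Ω → ℝ} {M t : ℝ}
    (ht : 0 ≤ t) (hX : AEMeasurable X μ) (h0 : ∀ᵐ ω ∂μ, 0 ≤ X ω) (hM : ∀ᵐ ω ∂μ, X ω ≤ M) :
    mgf X μ (-t) ≤ 1 - t * μ[X] + (t * M) ^ 2 / 2 := by
  have hXint : Integrable X μ := .of_mem_Icc 0 M hX (h0.and hM)
  calc mgf X μ (-t) ≤ ∫ ω, (1 + (t * M) ^ 2 / 2 - t * X ω) ∂μ := by
        refine integral_mono_ae (integrable_exp_mul_of_nonpos_of_nonneg (neg_nonpos.mpr ht) hX h0)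
          ((integrable_const _).sub (hXint.const_mul t)) ?_
        filter_upwards [h0, hM] with ω h0 hM
        have hsq : (t * X ω) ^ 2 ≤ (t * M) ^ 2 := by gcongr
        calc exp (-t * X ω) = exp (-(t * X ω)) := by rw [neg_mul]
          _ ≤ 1 - t * X ω + (t * X ω) ^ 2 / 2 :=
            exp_neg_le_one_sub_add_sq_div_two (mul_nonneg ht h0)
          _ ≤ 1 + (t * M) ^ 2 / 2 - t * X ω := by linarith
    _ = 1 - t * μ[X] + (t * M) ^ 2 / 2 := by
        rw [integral_sub (integrable_const _) (hXint.const_mul t), integral_const,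
          integral_const_mul, probReal_univ, one_smul]
        ring

lemma exists_exp_mul_mgf_neg_lt_one [IsProbabilityMeasure μ] {X : Ω → ℝ} {M y : ℝ}
    (hX : AEMeasurable X μ) (h0 : ∀ᵐ ω ∂μ, 0 ≤ X ω) (hM : ∀ᵐ ω ∂μ, X ω ≤ M) (hy : y < μ[X]) :
    ∃ t, 0 < t ∧ exp (t * y) * mgf X μ (-t) < 1 := by
  have hδ : 0 < μ[X] - y := sub_pos.mpr hy
  set t := (μ[X] - y) / (M ^ 2 + 1)
  have ht : 0 < t := by positivity
  have htM : t * M ^ 2 < μ[X] - y := by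
    rw [div_mul_eq_mul_div, div_lt_iff₀ (by positivity)]
    nlinarith
  refine ⟨t, ht, ?_⟩
  calc exp (t * y) * mgf X μ (-t) ≤ exp (t * y) * (1 - t * μ[X] + (t * M) ^ 2 / 2) := by
        gcongr
        exact mgf_neg_le_one_sub_mul_integral_add ht.le hX h0 hM
    _ ≤ exp (t * y) * exp (-t * μ[X] + (t * M) ^ 2 / 2) := by
        gcongr
        linarith [add_one_le_exp (-t * μ[X] + (t * M) ^ 2 / 2)]
    _ = exp (-t * (μ[X] - y - t * M ^ 2 / 2)) := by
        rw [← exp_add]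
        ring_nf
    _ < 1 := exp_lt_one_iff.mpr (by nlinarith)

lemma measureReal_sum_range_le_le_pow [IsProbabilityMeasure μ] {X : ℕ → Ω → ℝ}
    (hmeas : ∀ i, Measurable (X i)) (hindep : iIndepFun X μ)
    (hident : ∀ i, IdentDistrib (X i) (X 0) μ μ) {t : ℝ} (ht : t ≤ 0)
    (hint : ∀ i, Integrable (fun ω ↦ exp (t * X i ω)) μ) (y : ℝ) (n : ℕ) :
    μ.real {ω | ∑ i ∈ range n, X i ω ≤ n * y} ≤ (exp (-t * y) * mgf (X 0) μ t) ^ n := by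
  have hmgf : mgf (∑ i ∈ range n, X i) μ t = mgf (X 0) μ t ^ n := by
    rw [hindep.mgf_sum hmeas,
      prod_eq_pow_card fun i _ ↦ mgf_congr_of_identDistrib _ _ (hident i) t, card_range]
  calc μ.real {ω | ∑ i ∈ range n, X i ω ≤ n * y}
      = μ.real {ω | (∑ i ∈ range n, X i) ω ≤ n * y} := by simp only [Finset.sum_apply]
    _ ≤ exp (-t * (n * y)) * mgf (∑ i ∈ range n, X i) μ t :=
        measure_le_le_exp_mul_mgf _ ht (hindep.integrable_exp_mul_sum hmeas fun i _ ↦ hint i)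
    _ = (exp (-t * y) * mgf (X 0) μ t) ^ n := by
        rw [hmgf, mul_pow, ← exp_nat_mul]
        ring_nf

end

/-- Cramér-type bound: let `X 0, X 1, ...` be i.i.d. nonnegative random variables and let
`y < E[X]`, where the (possibly infinite) mean `E[X] ∈ (0,∞]` is expressed as a Lebesgue
integral in `ℝ≥0∞`.  Then there exists `r < 1` such that for every `n ≥ 1`,
`P(X 0 + ⋯ + X (n-1) ≤ n·y) ≤ r^n`. -/
theorem cramer_lower_deviation
    {Ω : Type*} [MeasureSpace Ω] [IsProbabilityMeasure (ℙ : Measure Ω)]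
    (X : ℕ → Ω → ℝ)
    (hmeas : ∀ i, Measurable (X i))
    (hindep : iIndepFun X ℙ)
    (hident : ∀ i, IdentDistrib (X i) (X 0) ℙ ℙ)
    (hnonneg : ∀ i, ∀ᵐ ω ∂ℙ, 0 ≤ X i ω)
    (y : ℝ)
    (hy : ENNReal.ofReal y < ∫⁻ ω, ENNReal.ofReal (X 0 ω) ∂ℙ) :
    ∃ r : ℝ, 0 ≤ r ∧ r < 1 ∧ ∀ n : ℕ, 1 ≤ n →
      ℙ {ω | ∑ i ∈ Finset.range n, X i ω ≤ n * y} ≤ ENNReal.ofReal (r ^ n) := by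
  obtain ⟨M, hM⟩ := exists_lt_integral_min_natCast (hmeas 0) (hnonneg 0) hy
  set Z : Ω → ℝ := fun ω ↦ min (X 0 ω) M
  have hZmeas : AEMeasurable Z ℙ := ((hmeas 0).min measurable_const).aemeasurable
  have hZnonneg : ∀ᵐ ω ∂ℙ, 0 ≤ Z ω := by
    filter_upwards [hnonneg 0] with ω h using le_min h M.cast_nonneg
  obtain ⟨t, ht, hZlt⟩ := exists_exp_mul_mgf_neg_lt_one hZmeas hZnonneg
    (ae_of_all _ fun ω ↦ min_le_right (X 0 ω) M) hM
  have hnt : -t ≤ 0 := neg_nonpos.mpr ht.le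
  have hint i := integrable_exp_mul_of_nonpos_of_nonneg hnt (hmeas i).aemeasurable (hnonneg i)
  have hXZ : mgf (X 0) ℙ (-t) ≤ mgf Z ℙ (-t) :=
    mgf_anti_of_nonpos (ae_of_all _ fun ω ↦ min_le_left _ _) hnt
      (integrable_exp_mul_of_nonpos_of_nonneg hnt hZmeas hZnonneg)
  refine ⟨Real.exp (t * y) * mgf (X 0) ℙ (-t), mul_nonneg (Real.exp_pos _).le mgf_nonneg,
    lt_of_le_of_lt (by gcongr) hZlt, fun n _ ↦ ?_⟩
  rw [← ofReal_measureReal]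
  gcongr
  simpa using measureReal_sum_range_le_le_pow hmeas hindep hident hnt hint y n
end
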